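/- arXiv:1105.4991 — 4 statements merged into one kernel-verified Lean document; each statement's English description precedes it below -/
import Mathlib

section
/- Let F be a field and N, N_E natural numbers with N_E ≤ N. Let A be an (N−N_E)×N matrix over F with rank N−N_E such that every nonzero vector in the row span of A has Hamming weight at least N_E+1 (i.e., A is a generator matrix of a maximum distance separable [N, N−N_E, N_E+1] code). Let ι : Fin N_E → Fin N be injective and let A_E be the N_E×N matrix whose i-th row is the standard basis vector e_{ι(i)}. Then the square N×N stacked matrix B = [A; A_E] has rank N, i.e., B is invertible. -/
/-! A vector in the row span of `A` that is also a combination of the `NE` unit rows of `A_E`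
has Hamming weight at most `NE`, so it vanishes by the MDS property. Hence the two row spaces
meet trivially, and the independent rows of `A` and of `A_E` are jointly independent. -/

open Submodule

theorem Matrix.linearIndependent_row_of_rank_eq_card {F m n : Type*} [Field F] [Fintype m]
    [Fintype n] {A : Matrix m n F} (hA : A.rank = Fintype.card m) : LinearIndependent F A.row := by
  rw [linearIndependent_iff_card_eq_finrank_span, Set.finrank, ← A.rank_eq_finrank_span_row, hA]

section Hamming

variable {F ι κ : Type*} [Semiring F] [Fintype ι] [DecidableEq ι] [Fintype κ] [DecidableEq F]

theorem hammingNorm_le_card_of_mem_span_single (f : κ → ι) {v : ι → F}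
    (hv : v ∈ span F (Set.range fun j => (Pi.single (f j) (1 : F) : ι → F))) :
    hammingNorm v ≤ Fintype.card κ := by
  have hspan : span F (Set.range fun j => (Pi.single (f j) (1 : F) : ι → F)) ≤
      Submodule.pi (Set.range f)ᶜ fun _ => ⊥ := by
    rw [span_le]
    rintro _ ⟨j, rfl⟩ i hi
    simp [show i ≠ f j from fun h => hi ⟨j, h.symm⟩]
  have hsupp : ({i | v i ≠ 0} : Finset ι) ⊆ Finset.univ.image f := by
    intro i hi
    by_contra hni
    refine (Finset.mem_filter.mp hi).2 ((mem_bot F).mp (hspan hv i ?_))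
    rintro ⟨j, rfl⟩
    exact hni (Finset.mem_image_of_mem f (Finset.mem_univ j))
  calc hammingNorm v ≤ (Finset.univ.image f).card := Finset.card_le_card hsupp
    _ ≤ Fintype.card κ := Finset.card_image_le

theorem disjoint_span_single_of_card_lt_hammingNorm {S : Submodule F (ι → F)} (f : κ → ι)
    (hS : ∀ v ∈ S, v ≠ 0 → Fintype.card κ + 1 ≤ hammingNorm v) :
    Disjoint S (span F (Set.range fun j => (Pi.single (f j) (1 : F) : ι → F))) := by
  rw [disjoint_def]
  intro v hvS hvT
  by_contra hv
  have := hS v hvS hv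
  have := hammingNorm_le_card_of_mem_span_single f hvT
  omega

end Hamming

/-- Let `F` be a field and `N_E ≤ N`. Let `A` be an `(N - N_E) × N` matrix over `F`
with `rank A = N - N_E` such that every nonzero vector in the row span of `A` has
Hamming weight at least `N_E + 1` (an MDS generator matrix). Let `ι : Fin N_E → Fin N`
be injective, and let `A_E` be the `N_E × N` matrix whose `i`-th row is the standard
basis vector `e_{ι i}`. Then the stacked `N × N` matrix `B = [A; A_E]` has rank `N`. -/
theorem stmt_2 (F : Type*) [Field F] [DecidableEq F] (N NE : ℕ) (hNE : NE ≤ N)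
    (A : Matrix (Fin (N - NE)) (Fin N) F) (hA : A.rank = N - NE)
    (hMDS : ∀ v ∈ Submodule.span F (Set.range A), v ≠ 0 → NE + 1 ≤ hammingNorm v)
    (ι : Fin NE → Fin N) (hι : Function.Injective ι)
    (AE : Matrix (Fin NE) (Fin N) F)
    (hAE : ∀ i, AE i = Pi.single (ι i) 1) :
    (Matrix.fromRows A AE).rank = N := by
  obtain rfl : AE = fun i => Pi.single (ι i) 1 := funext hAE
  have hArows : LinearIndependent F A.row :=
    Matrix.linearIndependent_row_of_rank_eq_card (by rwa [Fintype.card_fin])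
  have hAErows : LinearIndependent F fun i => (Pi.single (ι i) 1 : Fin N → F) := by
    simpa [Function.comp_def] using (Pi.basisFun F (Fin N)).linearIndependent.comp ι hι
  have hdisj := disjoint_span_single_of_card_lt_hammingNorm ι (by simpa using hMDS)
  have hrows : LinearIndependent F (Matrix.fromRows A fun i => Pi.single (ι i) 1).row :=
    hArows.sum_type hAErows hdisj
  rw [hrows.rank_matrix, Fintype.card_sum, Fintype.card_fin, Fintype.card_fin]
  omega
end

section
/- Let F be a field and N, N_E natural numbers with N_E ≤ N. Let A be an (N−N_E)×N matrix over F with rank N−N_E such that every nonzero vector in the row span of A has Hamming weight at least N_E+1. Let ι : Fin N_E → Fin N be injective and let A_E be the N_E×N matrix whose i-th row is the standard basis vector e_{ι(i)}. Then the linear map x ↦ (A·x, A_E·x) from F^N to F^{N−N_E} × F^{N_E} is bijective; equivalently, for every pair (y, w) ∈ F^{N−N_E} × F^{N_E} there is exactly one x ∈ F^N with A·x = y and A_E·x = w. -/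
/-! Vectors in the span of the `e_{ι i}` have Hamming weight at most `N_E`, while nonzero vectors
in the row span of `A` have weight more than `N_E`; so the two spans meet only in `0`, and the
`N - N_E` independent rows of `A` together with the `N_E` rows of `A_E` are `N` linearly
independent vectors in `F^N`. The stacked square matrix is therefore invertible. -/

open Submodule Set Matrix

lemma hammingNorm_le_card_of_mem_span_single_s3 {R n κ : Type*} [Semiring R] [DecidableEq R]
    [Fintype n] [DecidableEq n] [Fintype κ] (ι : κ → n) {v : n → R}
    (hv : v ∈ span R (range fun i => Pi.single (ι i) (1 : R))) :
    hammingNorm v ≤ Fintype.card κ := by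
  have hvanish : v ∈ Submodule.pi (range ι)ᶜ fun _ => (⊥ : Submodule R R) := by
    refine span_le.mpr ?_ hv
    rintro _ ⟨i, rfl⟩ j hj
    simp [show j ≠ ι i from fun h => hj ⟨i, h.symm⟩]
  have hsupp : (Finset.univ.filter fun j => v j ≠ 0) ⊆ Finset.univ.image ι := by
    intro j hj
    by_contra hjι
    exact (Finset.mem_filter.mp hj).2 (by simpa using hvanish j (by simpa using hjι))
  calc hammingNorm v = (Finset.univ.filter fun j => v j ≠ 0).card := rfl
    _ ≤ (Finset.univ.image ι).card := Finset.card_le_card hsupp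
    _ ≤ Fintype.card κ := Finset.card_image_le

lemma disjoint_of_hammingNorm_lt {R n : Type*} [Semiring R] [DecidableEq R] [Fintype n]
    {U W : Submodule R (n → R)} {k : ℕ} (hU : ∀ v ∈ U, v ≠ 0 → k < hammingNorm v)
    (hW : ∀ v ∈ W, hammingNorm v ≤ k) : Disjoint U W :=
  disjoint_def.mpr fun v hvU hvW => by
    by_contra hv
    exact (hU v hvU hv).not_ge (hW v hvW)

namespace Matrix

variable {K m n : Type*} [Field K] [Fintype m] [Fintype n]

lemma linearIndependent_row_of_rank_eq_card_s3 {M : Matrix m n K} (h : M.rank = Fintype.card m) :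
    LinearIndependent K M.row := by
  rw [linearIndependent_iff_card_eq_finrank_span, Set.finrank, ← rank_eq_finrank_span_row, h]

lemma bijective_mulVec_of_linearIndependent_row {M : Matrix m n K}
    (hcard : Fintype.card m = Fintype.card n) (hM : LinearIndependent K M.row) :
    Function.Bijective M.mulVec := by
  have hsurj : Function.Surjective M.mulVecLin := by
    rw [← LinearMap.range_eq_top]
    apply Submodule.eq_top_of_finrank_eq
    rw [← rank, hM.rank_matrix, Module.finrank_fintype_fun_eq_card]
  have hfinrank : Module.finrank K (n → K) = Module.finrank K (m → K) := by
    simp [hcard]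
  exact ⟨(LinearMap.injective_iff_surjective_of_finrank_eq_finrank hfinrank).mpr hsurj, hsurj⟩

end Matrix

/-- Let `F` be a field and `N_E ≤ N`. Let `A` be an `(N - N_E) × N` matrix over `F`
with `rank A = N - N_E` such that every nonzero vector in the row span of `A` has
Hamming weight at least `N_E + 1`. Let `ι : Fin N_E → Fin N` be injective, and let
`A_E` be the `N_E × N` matrix whose `i`-th row is the standard basis vector `e_{ι i}`.
Then the linear map `x ↦ (A ⬝ x, A_E ⬝ x)` from `F^N` to `F^{N-N_E} × F^{N_E}`
is bijective. -/
theorem stmt_3 (F : Type*) [Field F] [DecidableEq F] (N NE : ℕ) (hNE : NE ≤ N)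
    (A : Matrix (Fin (N - NE)) (Fin N) F) (hA : A.rank = N - NE)
    (hMDS : ∀ v ∈ Submodule.span F (Set.range A), v ≠ 0 → NE + 1 ≤ hammingNorm v)
    (ι : Fin NE → Fin N) (hι : Function.Injective ι)
    (AE : Matrix (Fin NE) (Fin N) F)
    (hAE : ∀ i, AE i = Pi.single (ι i) 1) :
    Function.Bijective (fun x : Fin N → F => (A.mulVec x, AE.mulVec x)) := by
  have hAE_row : AE.row = fun i => Pi.single (ι i) 1 := funext hAE
  have hArows : LinearIndependent F A.row :=
    linearIndependent_row_of_rank_eq_card_s3 (by rwa [Fintype.card_fin])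
  have hAErows : LinearIndependent F AE.row :=
    hAE_row ▸ (Pi.linearIndependent_single_one (Fin N) F).comp ι hι
  have hdisj : Disjoint (span F (range A.row)) (span F (range AE.row)) :=
    disjoint_of_hammingNorm_lt hMDS fun v hv => by
      simpa using hammingNorm_le_card_of_mem_span_single_s3 ι (hAE_row ▸ hv)
  have hrows : LinearIndependent F (fromRows A AE).row :=
    linearIndependent_sum.mpr ⟨hArows, hAErows, hdisj⟩
  have hbij := bijective_mulVec_of_linearIndependent_row (by simp; omega) hrows
  convert (Equiv.sumArrowEquivProdArrow _ _ F).bijective.comp hbij using 1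
  ext x <;> simp
end

section
/- Let F be a finite field and N, k, l natural numbers. Equip F^N with the uniform probability measure. Let f : F^N → F^k and g : F^N → F^l be linear maps such that the combined linear map x ↦ (f(x), g(x)) from F^N to F^k × F^l is surjective. Then, as random variables on F^N with the uniform measure, f and g are independent, and the distribution (pushforward measure) of f is the uniform measure on F^k. -/
/-!
A surjective additive map `φ : G → H` of finite groups has fibres that are cosets of its kernel,
all of the same size, so it pushes the uniform distribution of `G` to that of `H`. Applied to
`x ↦ (f x, g x)`, to `f` and to `g`, this makes the joint law of `(f, g)` the uniform law on
`F^k × F^l`, which is the product of the uniform laws of `f` and of `g`: that is independence.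
-/

open MeasureTheory ProbabilityTheory

namespace PMF

theorem eq_uniformOfFintype_of_apply_eq {α : Type*} [Fintype α] [Nonempty α] (p : PMF α)
    (h : ∀ a b, p a = p b) : p = uniformOfFintype α := by
  ext a
  have hsum : p a * Fintype.card α = 1 := by
    rw [← p.tsum_coe, tsum_fintype, Finset.sum_congr rfl fun b _ => h b a, Finset.sum_const,
      Finset.card_univ, nsmul_eq_mul, mul_comm]
  rw [uniformOfFintype_apply, ENNReal.eq_inv_of_mul_eq_one_left hsum]

theorem map_uniformOfFintype_of_surjective {G H Φ : Type*} [AddGroup G] [Fintype G]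
    [AddMonoid H] [Fintype H] [FunLike Φ G H] [AddMonoidHomClass Φ G H] (φ : Φ)
    (hφ : Function.Surjective φ) : (uniformOfFintype G).map φ = uniformOfFintype H := by
  classical
  refine eq_uniformOfFintype_of_apply_eq _ fun x y => ?_
  simp only [map_apply, uniformOfFintype_apply, tsum_fintype, Finset.sum_ite,
    Finset.sum_const_zero, add_zero, Finset.sum_const, nsmul_eq_mul, eq_comm (a := x),
    eq_comm (a := y), AddMonoidHom.card_fiber_eq_of_mem_range φ (hφ x) (hφ y)]

theorem toMeasure_uniformOfFintype_prod {α β : Type*} [Fintype α] [Nonempty α] [Fintype β]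
    [Nonempty β] [MeasurableSpace α] [MeasurableSingletonClass α] [MeasurableSpace β]
    [MeasurableSingletonClass β] :
    (uniformOfFintype (α × β)).toMeasure =
      (uniformOfFintype α).toMeasure.prod (uniformOfFintype β).toMeasure := by
  refine Measure.ext_of_singleton fun ⟨a, b⟩ => ?_
  rw [← Set.singleton_prod_singleton, Measure.prod_prod, Set.singleton_prod_singleton]
  simp only [toMeasure_apply_singleton _ _ (measurableSet_singleton _), uniformOfFintype_apply,
    Fintype.card_prod, Nat.cast_mul]
  exact ENNReal.mul_inv (by simp) (by simp)

theorem toMeasure_map_uniformOfFintype_of_surjective {G H Φ : Type*} [AddGroup G] [Fintype G]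
    [AddMonoid H] [Fintype H] [MeasurableSpace G] [DiscreteMeasurableSpace G] [MeasurableSpace H]
    [FunLike Φ G H] [AddMonoidHomClass Φ G H] (φ : Φ) (hφ : Function.Surjective φ) :
    (uniformOfFintype G).toMeasure.map φ = (uniformOfFintype H).toMeasure := by
  rw [toMeasure_map φ _ .of_discrete, map_uniformOfFintype_of_surjective φ hφ]

end PMF

/-- Let `F` be a finite field and equip `F^N` with the uniform probability measure.
If `f : F^N →ₗ F^k` and `g : F^N →ₗ F^l` are linear maps such that
`x ↦ (f x, g x)` is surjective, then `f` and `g` are independent random variables, and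
the distribution of `f` is the uniform measure on `F^k`. -/
theorem stmt_4 (F : Type*) [Field F] [Fintype F] (N k l : ℕ)
    (f : (Fin N → F) →ₗ[F] (Fin k → F)) (g : (Fin N → F) →ₗ[F] (Fin l → F))
    (hsurj : Function.Surjective (fun x : Fin N → F => (f x, g x))) :
    letI : MeasurableSpace (Fin N → F) := ⊤
    letI : MeasurableSpace (Fin k → F) := ⊤
    letI : MeasurableSpace (Fin l → F) := ⊤
    IndepFun (⇑f) (⇑g) (PMF.uniformOfFintype (Fin N → F)).toMeasure ∧
      Measure.map (⇑f) (PMF.uniformOfFintype (Fin N → F)).toMeasure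
        = (PMF.uniformOfFintype (Fin k → F)).toMeasure := by
  let _ : MeasurableSpace (Fin N → F) := ⊤
  let _ : MeasurableSpace (Fin k → F) := ⊤
  let _ : MeasurableSpace (Fin l → F) := ⊤
  have hf : Function.Surjective f := fun y => (hsurj (y, 0)).imp fun _ hx => congrArg Prod.fst hx
  have hg : Function.Surjective g := fun y => (hsurj (0, y)).imp fun _ hx => congrArg Prod.snd hx
  refine ⟨(indepFun_iff_map_prod_eq_prod_map_map measurable_from_top.aemeasurable
    measurable_from_top.aemeasurable).2 ?_, PMF.toMeasure_map_uniformOfFintype_of_surjective f hf⟩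
  rw [PMF.toMeasure_map_uniformOfFintype_of_surjective f hf,
    PMF.toMeasure_map_uniformOfFintype_of_surjective g hg, ← PMF.toMeasure_uniformOfFintype_prod]
  exact PMF.toMeasure_map_uniformOfFintype_of_surjective (f.prod g) hsurj
end

section
/- For all real numbers δ, δ_E with 0 ≤ δ ≤ 1 and 0 ≤ δ_E ≤ 1, and every natural number n ≥ 2: δ_E·(1−δ)/(1 + δ_E·(δ − δ^{n−1})) ≥ δ_E·(1−δ)/(1 + (n−2)·δ_E·(1−δ)). -/
lemma aux_one_sub_pow (δ : ℝ) (h0 : 0 ≤ δ) (h1 : δ ≤ 1) :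
    ∀ m : ℕ, 1 - δ ^ m ≤ m * (1 - δ) := by
  intro m
  induction m with
  | zero => simp
  | succ k ih =>
    have hp : δ ^ k ≤ 1 := pow_le_one₀ h0 h1
    have hpn : 0 ≤ δ ^ k := pow_nonneg h0 k
    push_cast
    rw [pow_succ]
    nlinarith [mul_nonneg h0 (sub_nonneg.2 hp)]

/-- For all `δ, δ_E ∈ [0,1]` and natural `n ≥ 2`, the efficiency of the Basic
protocol dominates that of the pairwise alternative protocol:
`δ_E (1-δ) / (1 + δ_E (δ - δ^(n-1))) ≥ δ_E (1-δ) / (1 + (n-2) δ_E (1-δ))`. -/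
theorem stmt_14 (δ δE : ℝ) (hδ0 : 0 ≤ δ) (hδ1 : δ ≤ 1) (hδE0 : 0 ≤ δE) (hδE1 : δE ≤ 1)
    (n : ℕ) (hn : 2 ≤ n) :
    δE * (1 - δ) / (1 + δE * (δ - δ ^ (n - 1)))
      ≥ δE * (1 - δ) / (1 + ((n : ℝ) - 2) * (δE * (1 - δ))) := by
  obtain ⟨m, rfl⟩ : ∃ m, n = m + 2 := ⟨n - 2, by omega⟩
  have hmn : (m + 2) - 1 = m + 1 := by omega
  rw [hmn]
  have hpow1 : δ ^ m ≤ 1 := pow_le_one₀ hδ0 hδ1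
  have hpown : 0 ≤ δ ^ m := pow_nonneg hδ0 m
  have hkey : δ - δ ^ (m + 1) ≤ (m : ℝ) * (1 - δ) := by
    have h1 : δ - δ ^ (m + 1) = δ * (1 - δ ^ m) := by ring
    have h2 : δ * (1 - δ ^ m) ≤ 1 - δ ^ m := by nlinarith
    have h3 := aux_one_sub_pow δ hδ0 hδ1 m
    linarith
  have hnum : 0 ≤ δE * (1 - δ) := mul_nonneg hδE0 (by linarith)
  have hcast : ((m : ℝ) + 2) - 2 = (m : ℝ) := by ring
  push_cast
  rw [hcast]
  have hsub : 0 ≤ δ - δ ^ (m + 1) := by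
    have : δ ^ (m + 1) ≤ δ := by
      calc δ ^ (m + 1) = δ * δ ^ m := by ring
      _ ≤ δ * 1 := by nlinarith
      _ = δ := by ring
    linarith
  have hden1 : 0 < 1 + δE * (δ - δ ^ (m + 1)) := by nlinarith
  apply div_le_div_of_nonneg_left hnum hden1
  nlinarith [mul_le_mul_of_nonneg_left hkey hδE0]
end
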